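/- Let X be a complete CAT(0) space and let C ⊆ X be the union of the images of all geodesic lines parallel to a fixed geodesic line c : ℝ → X. Then C is a closed convex subset of X. -/

import Mathlib

/-- A CAT(0) space: a geodesic (midpoint) space satisfying the CN comparison inequality. -/
class CAT0Space (X : Type*) [MetricSpace X] : Prop where
  midpoint : ∀ x y : X, ∃ m : X, dist x m = dist x y / 2 ∧ dist m y = dist x y / 2
  comparison : ∀ x y z m : X, dist y m = dist y z / 2 → dist m z = dist y z / 2 →
    dist x m ^ 2 ≤ (dist x y ^ 2 + dist x z ^ 2) / 2 - dist y z ^ 2 / 4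

namespace CAT0Aux

variable {X : Type*} [MetricSpace X] [CAT0Space X]

/-- `m` is a metric midpoint of `y` and `z`. -/
def IsMid (m y z : X) : Prop := dist y m = dist y z / 2 ∧ dist m z = dist y z / 2

lemma IsMid.symm {m y z : X} (h : IsMid m y z) : IsMid m z y := by
  obtain ⟨h1, h2⟩ := h
  refine ⟨?_, ?_⟩ <;> rw [dist_comm] <;> rw [dist_comm y z] at * <;> assumption

lemma exists_mid (y z : X) : ∃ m, IsMid m y z := CAT0Space.midpoint y z

lemma cn {m y z : X} (h : IsMid m y z) (x : X) :
    dist x m ^ 2 ≤ (dist x y ^ 2 + dist x z ^ 2) / 2 - dist y z ^ 2 / 4 :=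
  CAT0Space.comparison x y z m h.1 h.2

/-- distance to a midpoint is at most the average of distances. -/
lemma dist_mid_le {m y z : X} (h : IsMid m y z) (x : X) :
    dist x m ≤ (dist x y + dist x z) / 2 := by
  have h1 := cn h x
  have h2 := abs_sub_abs_le_abs_sub (dist x y) (dist x z)
  rw [abs_of_nonneg dist_nonneg, abs_of_nonneg dist_nonneg] at h2
  have h3 : |dist x y - dist x z| ≤ dist y z := abs_sub_le_iff.mpr
    ⟨by have := dist_triangle x z y; rw [dist_comm z y] at this; linarith,
     by have := dist_triangle x y z; linarith⟩
  have h4 : dist x y - dist x z ≤ dist y z ∧ -(dist y z) ≤ dist x y - dist x z := by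
    constructor <;> [exact (abs_le.mp h3).2; exact (abs_le.mp h3).1]
  nlinarith [dist_nonneg (x := x) (y := m), dist_nonneg (x := x) (y := y),
    dist_nonneg (x := x) (y := z), dist_nonneg (x := y) (y := z)]

/-- midpoints are unique. -/
lemma mid_unique {m m' y z : X} (h : IsMid m y z) (h' : IsMid m' y z) : m = m' := by
  have h1 := cn h m'
  rw [dist_comm m' y, h'.1, h'.2] at h1
  have : dist m' m ^ 2 ≤ 0 := by ring_nf at h1 ⊢; linarith
  have h2 : dist m' m = 0 := by nlinarith [dist_nonneg (x := m') (y := m)]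
  exact (dist_eq_zero.mp h2).symm

/-- midpoints from a common basepoint. -/
lemma mid_contract_base {m1 m2 x y z : X} (h1 : IsMid m1 x y) (h2 : IsMid m2 x z) :
    dist m1 m2 ≤ dist y z / 2 := by
  have c1 := cn h2 y
  have c2 := cn h1 m2
  have e1 : dist m2 x = dist x z / 2 := by rw [dist_comm]; exact h2.1
  rw [e1] at c2
  rw [dist_comm m2 y] at c2
  rw [dist_comm y x] at c1
  have key : dist m2 m1 ^ 2 ≤ (dist y z / 2) ^ 2 := by nlinarith
  have : dist m2 m1 ≤ dist y z / 2 := by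
    nlinarith [dist_nonneg (x := m2) (y := m1), dist_nonneg (x := y) (y := z)]
  rwa [dist_comm] at this

/-- midpoints of two pairs. -/
lemma mid_contract {m1 m2 x1 y1 x2 y2 : X} (h1 : IsMid m1 x1 y1) (h2 : IsMid m2 x2 y2) :
    dist m1 m2 ≤ (dist x1 x2 + dist y1 y2) / 2 := by
  obtain ⟨m', hm'⟩ := exists_mid x1 y2
  have d1 : dist m1 m' ≤ dist y1 y2 / 2 := mid_contract_base h1 hm'
  have d2 : dist m' m2 ≤ dist x1 x2 / 2 := mid_contract_base hm'.symm h2.symm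
  calc dist m1 m2 ≤ dist m1 m' + dist m' m2 := dist_triangle _ _ _
    _ ≤ (dist x1 x2 + dist y1 y2) / 2 := by linarith

/-- Berg–Nikolaev quadrilateral inequality. -/
lemma quad_ineq (x1 x2 x3 x4 : X) :
    dist x1 x3 ^ 2 + dist x2 x4 ^ 2 ≤
      dist x1 x2 ^ 2 + dist x2 x3 ^ 2 + dist x3 x4 ^ 2 + dist x4 x1 ^ 2 := by
  rw [dist_comm x4 x1]
  obtain ⟨m, hm⟩ := exists_mid x1 x3
  have c1 := cn hm x2
  have c2 := cn hm x4
  have t : dist x2 x4 ≤ dist x2 m + dist m x4 := dist_triangle _ _ _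
  have hd : dist x2 m = dist x2 m := rfl
  have n1 : (0:ℝ) ≤ dist x2 m := dist_nonneg
  have n2 : (0:ℝ) ≤ dist m x4 := dist_nonneg
  have n3 : (0:ℝ) ≤ dist x2 x4 := dist_nonneg
  have e2 : dist x4 m = dist m x4 := dist_comm _ _
  have e3 : dist x2 x1 = dist x1 x2 := dist_comm _ _
  have e4 : dist x4 x1 = dist x1 x4 := dist_comm _ _
  have e5 : dist x4 x3 = dist x3 x4 := dist_comm _ _
  rw [e2] at c2
  rw [e3] at c1
  rw [e4, e5] at c2
  have h24 : dist x2 x4 ^ 2 ≤ (dist x2 m + dist m x4) ^ 2 :=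
    pow_le_pow_left₀ n3 t 2
  nlinarith [sq_nonneg (dist x2 m - dist m x4)]


/-- A bounded-above midpoint-convex function on ℝ is constant. -/
lemma midconvex_bounded_const (f : ℝ → ℝ) (M : ℝ)
    (mc : ∀ s t : ℝ, f ((s + t) / 2) ≤ (f s + f t) / 2)
    (bd : ∀ t, f t ≤ M) : ∀ s t, f s = f t := by
  -- first: for any x h, f (x+h) ≤ f x
  have key : ∀ x h : ℝ, f (x + h) ≤ f x := by
    intro x h
    by_contra hlt
    push_neg at hlt
    set δ := f (x + h) - f x with hδ
    have hδpos : 0 < δ := by simp [hδ]; linarith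
    -- increments grow
    have incr : ∀ n : ℕ, f (x + (n + 1) * h) - f (x + n * h) ≥ δ := by
      intro n
      induction n with
      | zero => simp [hδ]
      | succ k ih =>
        have := mc (x + k * h) (x + (k + 2) * h)
        have e : (x + k * h + (x + (k + 2) * h)) / 2 = x + (k + 1) * h := by ring
        rw [e] at this
        push_cast
        push_cast at ih this
        have e2 : x + ((k:ℝ) + 1 + 1) * h = x + ((k:ℝ) + 2) * h := by ring
        rw [e2]
        linarith
    have grow : ∀ n : ℕ, f (x + n * h) ≥ f x + n * δ := by
      intro n
      induction n with
      | zero => simp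
      | succ k ih =>
        have := incr k
        push_cast
        push_cast at ih this
        linarith
    obtain ⟨n, hn⟩ := exists_nat_gt ((M - f x) / δ)
    have := grow n
    have h2 : (M - f x) / δ * δ < n * δ := by
      exact mul_lt_mul_of_pos_right hn hδpos
    rw [div_mul_cancel₀ _ (ne_of_gt hδpos)] at h2
    have := bd (x + n * h)
    linarith
  intro s t
  have h1 := key s (t - s)
  have h2 := key t (s - t)
  simp only [add_sub_cancel] at h1 h2
  linarith

/-- A coercive continuous-ish function given as distance along a line attains a minimum. -/
lemma exists_min_of_lipschitz_coercive (φ : ℝ → ℝ)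
    (lip : ∀ s t, |φ s - φ t| ≤ |s - t|)
    (coer : ∀ t, |t| - φ 0 ≤ φ t) : ∃ u, ∀ t, φ u ≤ φ t := by
  have hφcont : Continuous φ := by
    have : LipschitzWith 1 φ := by
      apply LipschitzWith.of_dist_le_mul
      intro s t
      simp only [Real.dist_eq, NNReal.coe_one, one_mul]
      exact lip s t
    exact this.continuous
  set R := 2 * |φ 0| + 1 with hR
  have hcpt : IsCompact (Set.Icc (-R) R) := isCompact_Icc
  have hne : (Set.Icc (-R) R).Nonempty := by
    refine ⟨0, ?_⟩
    constructor <;> simp [hR] <;> linarith [abs_nonneg (φ 0)]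
  obtain ⟨u, hu, humin⟩ := hcpt.exists_isMinOn hne (hφcont.continuousOn)
  refine ⟨u, fun t => ?_⟩
  by_cases ht : t ∈ Set.Icc (-R) R
  · exact humin ht
  · have h0 : (0:ℝ) ∈ Set.Icc (-R) R := by
      constructor <;> simp [hR] <;> linarith [abs_nonneg (φ 0)]
    have hu0 : φ u ≤ φ 0 := humin h0
    have htR : R < |t| := by
      rcases abs_cases t with ⟨he, _⟩ | ⟨he, _⟩
      · rw [he]; by_contra hh; push_neg at hh
        exact ht ⟨by linarith [abs_nonneg t, he ▸ (le_abs_self t)], by linarith⟩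
      · rw [he]; by_contra hh; push_neg at hh
        exact ht ⟨by linarith, by linarith [neg_abs_le t]⟩
    have : |t| - φ 0 ≤ φ t := coer t
    have hphi0 : φ 0 ≤ |φ 0| := le_abs_self _
    linarith [abs_nonneg (φ 0)]


/-- geodesic line predicate -/
def IsLine {X : Type*} [MetricSpace X] (a : ℝ → X) : Prop :=
  ∀ s t : ℝ, dist (a s) (a t) = |s - t|

lemma IsLine.mid {a : ℝ → X} (ha : IsLine a) (s t : ℝ) :
    IsMid (a ((s + t) / 2)) (a s) (a t) := by
  constructor
  · rw [ha s ((s+t)/2), ha s t]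
    rw [show s - (s+t)/2 = (s-t)/2 by ring, abs_div]
    simp
  · rw [ha ((s+t)/2) t, ha s t]
    rw [show (s+t)/2 - t = (s-t)/2 by ring, abs_div]
    simp

lemma IsLine.lipschitz {a : ℝ → X} (ha : IsLine a) (x : X) (s t : ℝ) :
    |dist x (a s) - dist x (a t)| ≤ |s - t| := by
  rw [← ha s t, dist_comm x (a s), dist_comm x (a t)]
  exact abs_dist_sub_le (a s) (a t) x

/-- constancy of distance between two parallel lines. -/
lemma dist_line_const {a b : ℝ → X} (ha : IsLine a) (hb : IsLine b) (M : ℝ)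
    (hM : ∀ t, dist (a t) (b t) ≤ M) (s t : ℝ) : dist (a s) (b s) = dist (a t) (b t) := by
  apply midconvex_bounded_const (fun t => dist (a t) (b t)) M _ hM
  intro u v
  exact mid_contract (ha.mid u v) (hb.mid u v)

/-- squared CN along a line. -/
lemma cn_line {a : ℝ → X} (ha : IsLine a) (x : X) (s t : ℝ) :
    dist x (a ((s + t) / 2)) ^ 2 ≤
      (dist x (a s) ^ 2 + dist x (a t) ^ 2) / 2 - (s - t) ^ 2 / 4 := by
  have := cn (ha.mid s t) x
  rw [ha s t] at this
  rwa [sq_abs] at this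

/-- the "right angle" inequality at a closest point on a line. -/
lemma dist_sq_ge_of_min {a : ℝ → X} (ha : IsLine a) (x : X)
    (hmin : ∀ t, dist x (a 0) ≤ dist x (a t)) (s : ℝ) :
    dist x (a 0) ^ 2 + s ^ 2 ≤ dist x (a s) ^ 2 := by
  set D := dist x (a 0) with hD
  have hF : ∀ r : ℝ, dist x (a r) ^ 2 ≥ 2 * dist x (a (r/2)) ^ 2 - D ^ 2 + r ^ 2 / 2 := by
    intro r
    have := cn_line ha x 0 r
    rw [show (0 + r) / 2 = r / 2 by ring] at this
    nlinarith
  have main : ∀ n : ℕ, ∀ r : ℝ, (1 - (1/2) ^ n) * r ^ 2 ≤ dist x (a r) ^ 2 - D ^ 2 := by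
    intro n
    induction n with
    | zero =>
      intro r; simp
      have := hmin r
      nlinarith [dist_nonneg (x := x) (y := a 0), dist_nonneg (x := x) (y := a r)]
    | succ k ih =>
      intro r
      have h1 := hF r
      have h2 := ih (r / 2)
      have e : ((1:ℝ)/2) ^ (k+1) = (1/2)^k / 2 := by ring
      rw [e]
      nlinarith
  by_cases hs : s = 0
  · subst hs; simp [hD]
  · by_contra hcon
    push_neg at hcon
    have hs2 : 0 < s ^ 2 := by positivity
    set ε := D ^ 2 + s ^ 2 - dist x (a s) ^ 2 with hε
    have hεpos : 0 < ε := by simp [hε]; linarith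
    obtain ⟨n, hn⟩ := exists_pow_lt_of_lt_one (show (0:ℝ) < ε / s^2 by positivity)
      (show (1:ℝ)/2 < 1 by norm_num)
    have := main n s
    have h3 : (1/2:ℝ)^n * s^2 < ε / s^2 * s^2 := by
      exact mul_lt_mul_of_pos_right hn hs2
    rw [div_mul_cancel₀ _ (ne_of_gt hs2)] at h3
    nlinarith

lemma IsLine.shift {a : ℝ → X} (ha : IsLine a) (u : ℝ) : IsLine (fun r => a (r + u)) := by
  intro s t
  rw [ha]
  congr 1
  ring

/-- translation invariance of the cross-distance between two parallel lines. -/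
lemma strip_trans {a b : ℝ → X} (ha : IsLine a) (hb : IsLine b) (M : ℝ)
    (hM : ∀ t, dist (a t) (b t) ≤ M) (T s : ℝ) :
    dist (b s) (a (s + T)) = dist (b 0) (a T) := by
  have h := dist_line_const (ha.shift T) hb (M + |T|) (fun t => ?_) s 0
  · rw [dist_comm (b s), h, dist_comm]
    norm_num
  · calc dist (a (t + T)) (b t) ≤ dist (a (t + T)) (a t) + dist (a t) (b t) :=
        dist_triangle _ _ _
      _ ≤ M + |T| := by
        rw [ha]
        have : |t + T - t| = |T| := by congr 1; ring
        rw [this]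
        linarith [hM t]

/-- The flat strip: exact distance formula between two parallel lines. -/
lemma strip {a b : ℝ → X} (ha : IsLine a) (hb : IsLine b) (M : ℝ)
    (hM : ∀ t, dist (a t) (b t) ≤ M) :
    ∃ u₀ : ℝ, ∀ s T : ℝ,
      dist (b s) (a (s + T)) ^ 2 = dist (b 0) (a u₀) ^ 2 + (T - u₀) ^ 2 := by
  set χ : ℝ → ℝ := fun T => dist (b 0) (a T) with hχ
  obtain ⟨u₀, hu₀⟩ : ∃ u, ∀ t, χ u ≤ χ t := by
    apply exists_min_of_lipschitz_coercive χ (fun s t => ha.lipschitz (b 0) s t)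
    intro t
    have h1 : dist (a 0) (a t) ≤ dist (a 0) (b 0) + dist (b 0) (a t) := dist_triangle _ _ _
    rw [ha] at h1
    simp only [zero_sub, abs_neg] at h1
    have : χ 0 = dist (a 0) (b 0) := dist_comm _ _
    simp only [hχ]
    rw [dist_comm (b 0) (a 0)]
    linarith
  -- right angle inequality
  have hra : ∀ s : ℝ, χ u₀ ^ 2 + s ^ 2 ≤ χ (s + u₀) ^ 2 := by
    intro s
    have := dist_sq_ge_of_min (ha.shift u₀) (b 0) (fun t => ?_) s
    · simpa using this
    · simpa using hu₀ (t + u₀)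
  -- Berg–Nikolaev on the quadrilateral (b 0, a u₀, a (T + u₀), b T)
  have hbn : ∀ T : ℝ, χ (T + u₀) ^ 2 + χ (-T + u₀) ^ 2 ≤ 2 * χ u₀ ^ 2 + 2 * T ^ 2 := by
    intro T
    have q := quad_ineq (b 0) (a u₀) (a (T + u₀)) (b T)
    have e1 : dist (a u₀) (a (T + u₀)) ^ 2 = T ^ 2 := by
      rw [ha]
      rw [show u₀ - (T + u₀) = -T by ring, abs_neg, sq_abs]
    have e2 : dist (a (T + u₀)) (b T) = χ u₀ := by
      rw [dist_comm, strip_trans ha hb M hM]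
    have e3 : dist (b T) (b 0) ^ 2 = T ^ 2 := by
      rw [hb, show T - 0 = T by ring, sq_abs]
    have e4 : dist (a u₀) (b T) = χ (-T + u₀) := by
      rw [dist_comm]
      have h' := strip_trans ha hb M hM (-T + u₀) T
      rw [show T + (-T + u₀) = u₀ by ring] at h'
      exact h' 
    have e5 : dist (b 0) (a (T + u₀)) = χ (T + u₀) := rfl
    have e6 : dist (b 0) (a u₀) = χ u₀ := rfl
    rw [e2, e3, e4, e5, e6, e1] at q
    linarith
  have hexact : ∀ T : ℝ, χ (T + u₀) ^ 2 = χ u₀ ^ 2 + T ^ 2 := by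
    intro T
    have h1 := hra T
    have h2 := hra (-T)
    have h3 := hbn T
    nlinarith [h1, h2, h3]
  refine ⟨u₀, fun s T => ?_⟩
  rw [strip_trans ha hb M hM]
  have := hexact (T - u₀)
  rw [show T - u₀ + u₀ = T by ring] at this
  exact this

/-- Busemann-type function along the positive direction of a line (shifted by `u₀`). -/
noncomputable def Bus (a : ℝ → X) (u₀ : ℝ) (x : X) : ℝ :=
  ⨅ n : ℕ, (dist x (a (u₀ + n)) - n)

section Bus

variable {a : ℝ → X} (ha : IsLine a) (u₀ : ℝ)

omit [CAT0Space X]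
include ha

lemma bus_bddBelow (x : X) :
    BddBelow (Set.range fun n : ℕ => (dist x (a (u₀ + n)) - n)) := by
  refine ⟨-dist x (a u₀), ?_⟩
  rintro r ⟨n, rfl⟩
  have h1 : dist (a u₀) (a (u₀ + n)) ≤ dist (a u₀) x + dist x (a (u₀ + n)) :=
    dist_triangle _ _ _
  rw [ha] at h1
  rw [show u₀ - (u₀ + (n:ℝ)) = -(n:ℝ) by ring, abs_neg, Nat.abs_cast] at h1
  rw [dist_comm (a u₀) x] at h1
  simp only [Set.mem_setOf_eq]
  linarith

lemma bus_le (x : X) (n : ℕ) : Bus a u₀ x ≤ dist x (a (u₀ + n)) - n :=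
  ciInf_le (bus_bddBelow ha u₀ x) n

lemma bus_ge (x : X) (C : ℝ) (h : ∀ n : ℕ, C ≤ dist x (a (u₀ + n)) - n) :
    C ≤ Bus a u₀ x := le_ciInf h

lemma bus_lip (x y : X) : Bus a u₀ x ≤ Bus a u₀ y + dist x y := by
  have h : ∀ n : ℕ, Bus a u₀ x - dist x y ≤ dist y (a (u₀ + n)) - n := by
    intro n
    have h1 := bus_le ha u₀ x n
    have h2 : dist x (a (u₀ + n)) ≤ dist x y + dist y (a (u₀ + n)) := dist_triangle _ _ _
    linarith
  have := le_ciInf h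
  rw [show Bus a u₀ y = ⨅ n : ℕ, (dist y (a (u₀ + n)) - n) from rfl]
  linarith [this]

lemma bus_antitone (x : X) (k l : ℕ) (hkl : k ≤ l) :
    dist x (a (u₀ + l)) - l ≤ dist x (a (u₀ + k)) - k := by
  have h1 : dist x (a (u₀ + l)) ≤ dist x (a (u₀ + k)) + dist (a (u₀ + k)) (a (u₀ + l)) :=
    dist_triangle _ _ _
  rw [ha] at h1
  rw [show u₀ + (k:ℝ) - (u₀ + (l:ℝ)) = -((l:ℝ) - k) by ring, abs_neg,
    abs_of_nonneg (by have h' : (k:ℝ) ≤ l := Nat.cast_le.mpr hkl; linarith)] at h1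
  linarith

lemma bus_on_line (t : ℝ) : Bus a u₀ (a t) = u₀ - t := by
  apply le_antisymm
  · obtain ⟨n, hn⟩ := exists_nat_ge (t - u₀)
    have h1 := bus_le ha u₀ (a t) n
    rw [ha, abs_of_nonpos (by linarith)] at h1
    calc Bus a u₀ (a t) ≤ -(t - (u₀ + n)) - n := h1
      _ = u₀ - t := by ring
  · apply bus_ge ha
    intro n
    have : (u₀ + (n:ℝ)) - t ≤ |t - (u₀ + n)| := by
      rw [abs_sub_comm]; exact le_abs_self _
    rw [ha]
    linarith

end Bus

lemma bus_mid {a : ℝ → X} (ha : IsLine a) (u₀ : ℝ) {w y z : X} (hw : IsMid w y z) :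
    Bus a u₀ w ≤ (Bus a u₀ y + Bus a u₀ z) / 2 := by
  apply le_of_forall_pos_le_add
  intro ε hε
  have hy : Bus a u₀ y < Bus a u₀ y + ε := by linarith
  have hz : Bus a u₀ z < Bus a u₀ z + ε := by linarith
  obtain ⟨n₁, hn₁⟩ := exists_lt_of_ciInf_lt (hy.trans_le (le_refl _))
  obtain ⟨n₂, hn₂⟩ := exists_lt_of_ciInf_lt (hz.trans_le (le_refl _))
  set n := max n₁ n₂ with hn
  have e1 : dist y (a (u₀ + n)) - n ≤ dist y (a (u₀ + n₁)) - n₁ :=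
    bus_antitone ha u₀ y n₁ n (le_max_left _ _)
  have e2 : dist z (a (u₀ + n)) - n ≤ dist z (a (u₀ + n₂)) - n₂ :=
    bus_antitone ha u₀ z n₂ n (le_max_right _ _)
  have hmd := dist_mid_le hw (a (u₀ + n))
  have h3 := bus_le ha u₀ w n
  rw [dist_comm w (a (u₀ + n))] at h3
  have h4 : dist (a (u₀ + n)) y = dist y (a (u₀ + n)) := dist_comm _ _
  have h5 : dist (a (u₀ + n)) z = dist z (a (u₀ + n)) := dist_comm _ _
  rw [h4, h5] at hmd
  linarith

omit [CAT0Space X] in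
lemma IsLine.neg {a : ℝ → X} (ha : IsLine a) : IsLine (fun r => a (-r)) := by
  intro s t
  rw [ha]
  rw [show (-s) - (-t) = -(s - t) by ring, abs_neg]

omit [CAT0Space X] in
lemma bus_neg_eq {a : ℝ → X} (u₀ : ℝ) (x : X) :
    Bus (fun r => a (-r)) (-u₀) x = ⨅ n : ℕ, (dist x (a (u₀ - n)) - n) := by
  unfold Bus
  congr 1
  funext n
  congr 2
  ring

omit [CAT0Space X] in
lemma bus_pair {a : ℝ → X} (ha : IsLine a) (u₀ : ℝ) (x : X) :
    0 ≤ Bus a u₀ x + Bus (fun r => a (-r)) (-u₀) x := by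
  rw [bus_neg_eq]
  have key : ∀ k : ℕ, -(dist x (a (u₀ - k)) - k) ≤ Bus a u₀ x := by
    intro k
    apply bus_ge ha
    intro n
    have h1 : dist (a (u₀ - k)) (a (u₀ + n)) ≤ dist (a (u₀ - k)) x + dist x (a (u₀ + n)) :=
      dist_triangle _ _ _
    rw [ha] at h1
    rw [show u₀ - (k:ℝ) - (u₀ + (n:ℝ)) = -((k:ℝ) + n) by ring, abs_neg,
      abs_of_nonneg (by positivity)] at h1
    rw [dist_comm (a (u₀ - k)) x] at h1
    linarith
  have h2 : -Bus a u₀ x ≤ ⨅ n : ℕ, (dist x (a (u₀ - n)) - n) := by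
    apply le_ciInf
    intro k
    linarith [key k]
  linarith [h2]

omit [CAT0Space X] in
lemma bus_on_parallel {a b : ℝ → X} (ha : IsLine a) (u₀ D₀ : ℝ) (hD₀ : 0 ≤ D₀)
    (hD : ∀ s T : ℝ, dist (b s) (a (s + T)) ^ 2 = D₀ ^ 2 + (T - u₀) ^ 2) (t : ℝ) :
    Bus a u₀ (b t) = -t := by
  have hdist : ∀ n : ℕ, dist (b t) (a (u₀ + n)) ^ 2 = D₀ ^ 2 + ((n:ℝ) - t) ^ 2 := by
    intro n
    have h := hD t (u₀ + n - t)
    rw [show t + (u₀ + (n:ℝ) - t) = u₀ + n by ring] at h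
    rw [h]
    ring_nf
  apply le_antisymm
  · apply le_of_forall_pos_le_add
    intro ε hε
    obtain ⟨n, hn⟩ := exists_nat_gt (t + D₀ ^ 2 / (2 * ε))
    have hnt : t < (n:ℝ) := by
      have : (0:ℝ) ≤ D₀ ^ 2 / (2 * ε) := by positivity
      linarith
    have hub : dist (b t) (a (u₀ + n)) ≤ ((n:ℝ) - t) + ε := by
      have hsq : dist (b t) (a (u₀ + n)) ^ 2 ≤ (((n:ℝ) - t) + ε) ^ 2 := by
        rw [hdist n]
        have h1 : D₀ ^ 2 / (2 * ε) < (n:ℝ) - t := by linarith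
        have h2 : D₀ ^ 2 < 2 * ε * ((n:ℝ) - t) := by
          rw [div_lt_iff₀ (by positivity)] at h1
          linarith
        nlinarith
      nlinarith [dist_nonneg (x := b t) (y := a (u₀ + n)), hε, hnt]
    have := bus_le ha u₀ (b t) n
    linarith
  · apply bus_ge ha
    intro n
    have h1 := hdist n
    have h2 : ((n:ℝ) - t) ≤ dist (b t) (a (u₀ + n)) := by
      nlinarith [dist_nonneg (x := b t) (y := a (u₀ + n))]
    linarith

/-- The midpoint curve of two parallel lines is a line. -/
lemma mid_line {a b m : ℝ → X} (ha : IsLine a) (hb : IsLine b) (M : ℝ)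
    (hM : ∀ t, dist (a t) (b t) ≤ M)
    (hm : ∀ t, IsMid (m t) (a t) (b t)) : IsLine m := by
  obtain ⟨u₀, hD⟩ := strip ha hb M hM
  set D₀ := dist (b 0) (a u₀) with hD₀def
  have hD₀ : 0 ≤ D₀ := dist_nonneg
  have haneg := ha.neg
  have hbneg := hb.neg
  have hDneg : ∀ s T : ℝ, dist ((fun r => b (-r)) s) ((fun r => a (-r)) (s + T)) ^ 2
      = D₀ ^ 2 + (T - (-u₀)) ^ 2 := by
    intro s T
    simp only
    have h := hD (-s) (-T)
    rw [show -s + -T = -(s + T) by ring] at h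
    rw [h]
    ring
  -- Busemann value on the midpoint curve
  have hBm : ∀ t : ℝ, Bus a u₀ (m t) = u₀ / 2 - t := by
    intro t
    have h1 := bus_mid ha u₀ (hm t)
    rw [bus_on_line ha u₀ t, bus_on_parallel ha u₀ D₀ hD₀ hD t] at h1
    have h2 := bus_mid haneg (-u₀) (hm t)
    have e1 : (fun r => a (-r)) (-t) = a t := by simp
    have e2 : (fun r => b (-r)) (-t) = b t := by simp
    have h3 : Bus (fun r => a (-r)) (-u₀) (a t) = t - u₀ := by
      rw [← e1, bus_on_line haneg (-u₀) (-t)]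
      ring
    have h4 : Bus (fun r => a (-r)) (-u₀) (b t) = t := by
      rw [← e2, bus_on_parallel haneg (-u₀) D₀ hD₀ hDneg (-t)]
      ring
    rw [h3, h4] at h2
    have h5 := bus_pair ha u₀ (m t)
    linarith
  -- conclude
  intro s t
  have upper : dist (m s) (m t) ≤ |s - t| := by
    have h := mid_contract (hm s) (hm t)
    rw [ha, hb] at h
    linarith
  have lower : ∀ u v : ℝ, Bus a u₀ (m u) ≤ Bus a u₀ (m v) + dist (m u) (m v) :=
    fun u v => bus_lip ha u₀ (m u) (m v)
  have l1 := lower s t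
  have l2 := lower t s
  rw [hBm s, hBm t] at l1 l2
  rw [dist_comm (m t) (m s)] at l2
  rcases le_total s t with h | h
  · rw [abs_of_nonpos (by linarith : s - t ≤ 0)] at upper ⊢
    linarith
  · rw [abs_of_nonneg (by linarith : 0 ≤ s - t)] at upper ⊢
    linarith

end CAT0Aux

/-- The union of the images of all geodesic lines parallel to (i.e. at bounded distance from)
a fixed geodesic line `c`. -/
def ParallelSet {X : Type*} [MetricSpace X] (c : ℝ → X) : Set X :=
  {x : X | ∃ c' : ℝ → X, (∀ s t : ℝ, dist (c' s) (c' t) = |s - t|) ∧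
    (∃ M : ℝ, ∀ t : ℝ, dist (c t) (c' t) ≤ M) ∧ ∃ t : ℝ, c' t = x}

namespace CAT0Aux

variable {X : Type*} [MetricSpace X] [CAT0Space X]

lemma exists_line_through {c : ℝ → X} (hc : IsLine c) {x : X} (hx : x ∈ ParallelSet c) :
    ∃ a : ℝ → X, IsLine a ∧ (∃ M, ∀ t, dist (c t) (a t) ≤ M) ∧ a 0 = x := by
  obtain ⟨c', hline, ⟨M, hMb⟩, t₀, ht₀⟩ := hx
  refine ⟨fun t => c' (t + t₀), (show IsLine c' from hline).shift t₀, ⟨M + |t₀|, fun t => ?_⟩, by simpa⟩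
  calc dist (c t) (c' (t + t₀))
      ≤ dist (c t) (c (t + t₀)) + dist (c (t + t₀)) (c' (t + t₀)) := dist_triangle _ _ _
    _ ≤ M + |t₀| := by
        rw [hc, show t - (t + t₀) = -t₀ by ring, abs_neg]
        linarith [hMb (t + t₀)]

/-- the metric midpoint of two points of the parallel set is in the parallel set. -/
lemma mid_mem {c : ℝ → X} (hc : IsLine c) {x y w : X} (hx : x ∈ ParallelSet c)
    (hy : y ∈ ParallelSet c) (hw : IsMid w x y) : w ∈ ParallelSet c := by
  obtain ⟨a, ha, ⟨Ma, hMa⟩, ha0⟩ := exists_line_through hc hx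
  obtain ⟨b, hb, ⟨Mb, hMb⟩, hb0⟩ := exists_line_through hc hy
  have hab : ∀ t, dist (a t) (b t) ≤ Ma + Mb := by
    intro t
    calc dist (a t) (b t) ≤ dist (a t) (c t) + dist (c t) (b t) := dist_triangle _ _ _
      _ ≤ Ma + Mb := by rw [dist_comm (a t)]; linarith [hMa t, hMb t]
  choose m hm using fun t => exists_mid (a t) (b t)
  have hml : IsLine m := mid_line ha hb (Ma + Mb) hab hm
  have hm0 : m 0 = w := by
    apply mid_unique (hm 0)
    rw [ha0, hb0]
    exact hw
  refine ⟨m, hml, ⟨Ma + (Ma + Mb) / 2, fun t => ?_⟩, 0, hm0⟩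
  have h1 : dist (a t) (m t) = dist (a t) (b t) / 2 := (hm t).1
  calc dist (c t) (m t) ≤ dist (c t) (a t) + dist (a t) (m t) := dist_triangle _ _ _
    _ ≤ Ma + (Ma + Mb) / 2 := by
        rw [h1]
        linarith [hMa t, hab t]

/-- The parallel set is closed. -/
lemma parallelSet_isClosed [CompleteSpace X] {c : ℝ → X} (hc : IsLine c) :
    IsClosed (ParallelSet c) := by
  refine isClosed_of_closure_subset fun x hx => ?_
  obtain ⟨u, hu, hulim⟩ := mem_closure_iff_seq_limit.mp hx
  choose bl hbl hM hb0 using fun n => exists_line_through hc (hu n)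
  choose Mn hMn using hM
  have hdeq : ∀ (t : ℝ) (n k : ℕ), dist (bl n t) (bl k t) = dist (u n) (u k) := by
    intro t n k
    have hbd : ∀ r, dist (bl n r) (bl k r) ≤ Mn n + Mn k := by
      intro r
      calc dist (bl n r) (bl k r) ≤ dist (bl n r) (c r) + dist (c r) (bl k r) :=
            dist_triangle _ _ _
        _ ≤ Mn n + Mn k := by rw [dist_comm (bl n r)]; linarith [hMn n r, hMn k r]
    have := dist_line_const (hbl n) (hbl k) (Mn n + Mn k) hbd t 0
    rw [hb0 n, hb0 k] at this
    exact this
  have hcs : ∀ t : ℝ, CauchySeq fun n => bl n t := by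
    intro t
    have hcu : CauchySeq u := hulim.cauchySeq
    rw [Metric.cauchySeq_iff] at hcu ⊢
    intro ε hε
    obtain ⟨N, hN⟩ := hcu ε hε
    exact ⟨N, fun p hp q hq => by rw [hdeq t p q]; exact hN p hp q hq⟩
  have halim : ∀ t : ℝ, ∃ l : X, Filter.Tendsto (fun n => bl n t) Filter.atTop (nhds l) :=
    fun t => cauchySeq_tendsto_of_complete (hcs t)
  choose A hA using halim
  have hAline : IsLine A := by
    intro s t
    have h1 : Filter.Tendsto (fun n => dist (bl n s) (bl n t)) Filter.atTop
        (nhds (dist (A s) (A t))) := (hA s).dist (hA t)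
    have h2 : (fun n => dist (bl n s) (bl n t)) = fun _ => |s - t| := by
      funext n; exact hbl n s t
    rw [h2] at h1
    exact (tendsto_nhds_unique h1 tendsto_const_nhds)
  have hA0 : A 0 = x := by
    have h1 : Filter.Tendsto (fun n => bl n 0) Filter.atTop (nhds (A 0)) := hA 0
    have h2 : (fun n => bl n 0) = u := by funext n; exact hb0 n
    rw [h2] at h1
    exact tendsto_nhds_unique h1 hulim
  refine ⟨A, hAline, ⟨Mn 0 + dist (u 0) x, fun t => ?_⟩, 0, hA0⟩
  have h1 : Filter.Tendsto (fun n => dist (bl 0 t) (bl n t)) Filter.atTop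
      (nhds (dist (bl 0 t) (A t))) := tendsto_const_nhds.dist (hA t)
  have h2 : (fun n => dist (bl 0 t) (bl n t)) = fun n => dist (u 0) (u n) := by
    funext n; exact hdeq t 0 n
  rw [h2] at h1
  have h3 : Filter.Tendsto (fun n => dist (u 0) (u n)) Filter.atTop
      (nhds (dist (u 0) x)) := tendsto_const_nhds.dist hulim
  have h4 : dist (bl 0 t) (A t) = dist (u 0) x := tendsto_nhds_unique h1 h3
  calc dist (c t) (A t) ≤ dist (c t) (bl 0 t) + dist (bl 0 t) (A t) := dist_triangle _ _ _
    _ ≤ Mn 0 + dist (u 0) x := by rw [h4]; linarith [hMn 0 t]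

end CAT0Aux

/-- In a complete CAT(0) space, the union of the images of all geodesic lines parallel to a
fixed geodesic line `c` is closed and convex (it contains, together with any two of its
points, every point metrically between them, i.e. the geodesic segment joining them). -/
theorem parallelSet_closed_convex {X : Type*} [MetricSpace X] [CAT0Space X] [CompleteSpace X]
    (c : ℝ → X) (hc : ∀ s t : ℝ, dist (c s) (c t) = |s - t|) :
    IsClosed (ParallelSet c) ∧
      ∀ x ∈ ParallelSet c, ∀ y ∈ ParallelSet c, ∀ m : X,
        dist x m + dist m y = dist x y → m ∈ ParallelSet c := by
  classical
  have hcl := CAT0Aux.parallelSet_isClosed hc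
  refine ⟨hcl, ?_⟩
  intro x hx y hy m hbet
  let S := {p : X × X // p.1 ∈ ParallelSet c ∧ p.2 ∈ ParallelSet c ∧
      dist p.1 m + dist m p.2 = dist p.1 p.2}
  have step : ∀ p : S, ∃ q : S, dist q.1.1 q.1.2 = dist p.1.1 p.1.2 / 2 := by
    rintro ⟨⟨uu, vv⟩, huP, hvP, hbetw⟩
    obtain ⟨w, hw⟩ := CAT0Aux.exists_mid uu vv
    have hwP := CAT0Aux.mid_mem hc huP hvP hw
    simp only at hbetw ⊢
    set D := dist uu vv with hD
    set s := dist uu m with hs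
    have hmv : dist m vv = D - s := by linarith
    have huw : dist uu w = D / 2 := hw.1
    have hwv : dist w vv = D / 2 := hw.2
    have hup2 : dist m w ≤ |D / 2 - s| := by
      have hcn := CAT0Aux.cn hw m
      have e1 : dist m uu = s := by rw [dist_comm]
      rw [e1, hmv] at hcn
      have hsq : dist m w ^ 2 ≤ (D / 2 - s) ^ 2 := by nlinarith
      have h1 : (0:ℝ) ≤ dist m w := dist_nonneg
      have h2 := abs_nonneg (D / 2 - s)
      nlinarith [sq_abs (D / 2 - s)]
    have hlow1 : D / 2 - s ≤ dist m w := by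
      have := dist_triangle uu m w
      linarith [huw]
    have hlow2 : s - D / 2 ≤ dist m w := by
      have h := dist_triangle uu w m
      rw [dist_comm w m] at h
      linarith [huw]
    rcases le_total s (D / 2) with hcase | hcase
    · have habs : |D / 2 - s| = D / 2 - s := abs_of_nonneg (by linarith)
      have hmw : dist m w = D / 2 - s := le_antisymm (habs ▸ hup2) hlow1
      refine ⟨⟨(uu, w), huP, hwP, ?_⟩, ?_⟩
      · simp only
        rw [huw, hmw]
        ring
      · simp only
        rw [huw]
    · have habs : |D / 2 - s| = s - D / 2 := by
        rw [abs_of_nonpos (by linarith)]; ring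
      have hmw : dist m w = s - D / 2 := le_antisymm (habs ▸ hup2) hlow2
      refine ⟨⟨(w, vv), hwP, hvP, ?_⟩, ?_⟩
      · simp only
        rw [dist_comm w m, hmw, hmv, hwv]
        ring
      · simp only
        rw [hwv]
  let f : S → S := fun p => (step p).choose
  have hf : ∀ p, dist (f p).1.1 (f p).1.2 = dist p.1.1 p.1.2 / 2 :=
    fun p => (step p).choose_spec
  let p0 : S := ⟨(x, y), hx, hy, hbet⟩
  let seq : ℕ → S := fun n => f^[n] p0
  have hseqd : ∀ n, dist (seq n).1.1 (seq n).1.2 = dist x y / 2 ^ n := by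
    intro n
    induction n with
    | zero => simp [seq, p0]
    | succ k ih =>
      have he : seq (k + 1) = f (seq k) := Function.iterate_succ_apply' f k p0
      rw [he, hf, ih]
      ring
  have hdm : ∀ n, dist (seq n).1.1 m ≤ dist x y / 2 ^ n := by
    intro n
    have h := (seq n).2.2.2
    have h2 := dist_nonneg (x := m) (y := (seq n).1.2)
    rw [← hseqd n]
    linarith
  have hlim : Filter.Tendsto (fun n => (seq n).1.1) Filter.atTop (nhds m) := by
    rw [tendsto_iff_dist_tendsto_zero]
    apply squeeze_zero (fun n => dist_nonneg)
      (fun n => hdm n)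
    exact Filter.Tendsto.div_atTop tendsto_const_nhds
      (tendsto_pow_atTop_atTop_of_one_lt (by norm_num : (1:ℝ) < 2))
  exact hcl.mem_of_tendsto hlim (Filter.Eventually.of_forall fun n => (seq n).2.1)
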